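/- Let X : ZMod n → ZMod 2 and suppose there exist natural numbers q > r > 0 with 𝔟^q X = 𝔟^r X. Then for every state s : ZMod n → ZMod 2 the state C(X)^(2^r) *ᵥ s is cyclic for X (so the height of the state transition diagram for X is at most 2^r), and every state s that is cyclic for X satisfies C(X)^(2^r · (2^{q−r} − 1)) *ᵥ s = s (so every cycle length divides 2^r · (2^{q−r} − 1)). -/
import Mathlib


open Matrix

/-- The discrete Baker transformation: `(𝔟 X) i = ∑_{j : 2*j = i} X j`. -/
def baker {n : ℕ} [NeZero n] (X : ZMod n → ZMod 2) : ZMod n → ZMod 2 :=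
  fun i => ∑ j ∈ Finset.univ.filter (fun j : ZMod n => (2 : ZMod n) * j = i), X j


/-- The circulant matrix of a vector `X : ZMod n → ZMod 2`, with entries
`C(X) i j = X (j - i)`. -/
def circulantVec {n : ℕ} (X : ZMod n → ZMod 2) : Matrix (ZMod n) (ZMod n) (ZMod 2) :=
  Matrix.of fun i j => X (j - i)


/-- A state `s` is cyclic for the rule `X` if some positive power of the
automaton operator `C(X)` returns `s` to itself. -/
def IsCyclicState {n : ℕ} [NeZero n] (X s : ZMod n → ZMod 2) : Prop :=
  ∃ m : ℕ, 0 < m ∧ (circulantVec X) ^ m *ᵥ s = s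

lemma zmod2_mul_self : ∀ x : ZMod 2, x * x = x := by decide

lemma zmod2_add_self : ∀ x : ZMod 2, x + x = 0 := by decide

lemma convolve_eq_baker {n : ℕ} [NeZero n] (X : ZMod n → ZMod 2) (d : ZMod n) :
    ∑ a : ZMod n, X a * X (d - a)
      = ∑ b ∈ Finset.univ.filter (fun b : ZMod n => (2 : ZMod n) * b = d), X b := by
  classical
  rw [← Finset.sum_filter_add_sum_filter_not Finset.univ
      (fun a : ZMod n => (2 : ZMod n) * a = d) (fun a => X a * X (d - a))]
  have h1 : ∑ a ∈ Finset.univ.filter (fun a : ZMod n => (2 : ZMod n) * a = d),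
      X a * X (d - a)
      = ∑ b ∈ Finset.univ.filter (fun b : ZMod n => (2 : ZMod n) * b = d), X b := by
    apply Finset.sum_congr rfl
    intro a ha
    simp only [Finset.mem_filter, Finset.mem_univ, true_and] at ha
    have : d - a = a := by rw [← ha]; ring
    rw [this, zmod2_mul_self]
  have h2 : ∑ a ∈ Finset.univ.filter (fun a : ZMod n => ¬ (2 : ZMod n) * a = d),
      X a * X (d - a) = 0 := by
    apply Finset.sum_involution (g := fun a _ => d - a)
    · intro a _
      have hdd : d - (d - a) = a := by ring
      rw [hdd, mul_comm (X (d - a)) (X a)]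
      exact zmod2_add_self _
    · intro a ha _
      simp only [Finset.mem_filter, Finset.mem_univ, true_and] at ha
      intro hc
      exact ha (by linear_combination -hc)
    · intro a ha
      simp only [Finset.mem_filter, Finset.mem_univ, true_and] at ha ⊢
      intro hc
      exact ha (by linear_combination -hc)
    · intro a _
      ring
  rw [h1, h2, add_zero]

lemma circulant_baker {n : ℕ} [NeZero n] (X : ZMod n → ZMod 2) :
    circulantVec (baker X) = circulantVec X ^ 2 := by
  ext i j
  rw [pow_two]
  simp only [circulantVec, Matrix.mul_apply, Matrix.of_apply, baker]
  rw [← convolve_eq_baker X (j - i)]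
  refine Fintype.sum_equiv (Equiv.addRight i) _ _ fun a => ?_
  simp only [Equiv.coe_addRight]
  have e1 : a + i - i = a := by ring
  have e2 : j - (a + i) = j - i - a := by ring
  rw [e1, e2]

lemma circulant_baker_iter {n : ℕ} [NeZero n] (X : ZMod n → ZMod 2) (k : ℕ) :
    circulantVec (baker^[k] X) = circulantVec X ^ (2 ^ k) := by
  induction k with
  | zero => simp
  | succ k ih =>
    rw [Function.iterate_succ_apply', circulant_baker, ih, ← pow_mul, pow_succ]

theorem height_and_cycles_of_baker_eventually_periodic {n : ℕ} [NeZero n]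
    (X : ZMod n → ZMod 2) (q r : ℕ) (hr : 0 < r) (hqr : r < q)
    (h : baker^[q] X = baker^[r] X) :
    (∀ s : ZMod n → ZMod 2, IsCyclicState X ((circulantVec X) ^ (2 ^ r) *ᵥ s)) ∧
    (∀ s : ZMod n → ZMod 2, IsCyclicState X s →
      (circulantVec X) ^ (2 ^ r * (2 ^ (q - r) - 1)) *ᵥ s = s) := by
  have key : circulantVec X ^ (2 ^ q) = circulantVec X ^ (2 ^ r) := by
    rw [← circulant_baker_iter, ← circulant_baker_iter, h]
  set m := 2 ^ r * (2 ^ (q - r) - 1) with hm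
  have h2 : (1:ℕ) ≤ 2 ^ (q - r) := Nat.one_le_two_pow
  have hle : 2 ^ r ≤ 2 ^ q := Nat.pow_le_pow_right (by norm_num) hqr.le
  have hlt : 2 ^ r < 2 ^ q := Nat.pow_lt_pow_right (by norm_num) hqr
  have hmN : m + 2 ^ r = 2 ^ q := by
    rw [hm, Nat.mul_sub_one, ← pow_add, Nat.add_comm r (q - r),
      Nat.sub_add_cancel hqr.le]
    omega
  have hmpos : 0 < m := by omega
  -- for any t ≥ 2^r, A ^ (t + m) = A ^ t
  have step : ∀ t : ℕ, 2 ^ r ≤ t → circulantVec X ^ (t + m) = circulantVec X ^ t := by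
    intro t ht
    have e1 : t + m = (t - 2 ^ r) + 2 ^ q := by omega
    have e2 : t = (t - 2 ^ r) + 2 ^ r := by omega
    rw [e1, pow_add, key, ← pow_add, ← e2]
  constructor
  · intro s
    refine ⟨m, hmpos, ?_⟩
    rw [Matrix.mulVec_mulVec, ← pow_add, Nat.add_comm m (2 ^ r)]
    rw [step _ le_rfl]
  · rintro s ⟨m₀, hm₀, hs⟩
    have hkm : ∀ k : ℕ, circulantVec X ^ (k * m₀) *ᵥ s = s := by
      intro k
      induction k with
      | zero => simp
      | succ k ih =>
        rw [Nat.succ_mul, pow_add, ← Matrix.mulVec_mulVec, hs, ih]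
    have hle' : 2 ^ r ≤ 2 ^ r * m₀ := Nat.le_mul_of_pos_right _ hm₀
    calc circulantVec X ^ m *ᵥ s
        = circulantVec X ^ m *ᵥ (circulantVec X ^ (2 ^ r * m₀) *ᵥ s) := by
          rw [hkm (2 ^ r)]
      _ = circulantVec X ^ (2 ^ r * m₀ + m) *ᵥ s := by
          rw [Matrix.mulVec_mulVec, ← pow_add, Nat.add_comm m _]
      _ = circulantVec X ^ (2 ^ r * m₀) *ᵥ s := by rw [step _ hle']
      _ = s := hkm (2 ^ r)
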